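/- arXiv:2604.27690 — 7 statements merged into one kernel-verified Lean document; each statement's English description precedes it below -/
import Mathlib

section
/- There is a constant C > 0 such that for every n ≥ 1 there is a deterministic online coloring algorithm for graphs on n vertices (a family of functions A_t : SimpleGraph (Fin (t+1)) → ℕ for t < n) with the property that for every simple graph G on Fin n whose odd girth is at least 7 (i.e. G contains no cycle of odd length less than 7), the induced coloring c(v) = A_v(G_v) is a proper coloring of G using at most C · n^(1/2) colors. -/
/-- The coloring produced by running the deterministic online algorithm `A`
(one function per arrival time `t < n`) on the graph `G`: vertex `v` is colored
by applying `A v` to the induced subgraph of `G` on the vertices `{0, …, v}`. -/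
def onlineColoring {n : ℕ} (A : (t : Fin n) → SimpleGraph (Fin (t.1 + 1)) → ℕ)
    (G : SimpleGraph (Fin n)) (v : Fin n) : ℕ :=
  A v (G.comap (Fin.castLE v.isLt))

/-- `c` is a proper coloring of `G` using at most `m` colors. -/
def ProperlyColorsWithin {n : ℕ} (G : SimpleGraph (Fin n)) (c : Fin n → ℕ) (m : ℝ) : Prop :=
  (∀ u v : Fin n, G.Adj u v → c u ≠ c v) ∧ ((Finset.univ.image c).card : ℝ) ≤ m

/-- The odd girth of `G` is at least `g`: `G` has no cycle of odd length less than `g`. -/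
def OddGirthAtLeast {V : Type*} (G : SimpleGraph V) (g : ℝ) : Prop :=
  ∀ (v : V) (w : G.Walk v v), w.IsCycle → Odd w.length → g ≤ (w.length : ℝ)

/-!
Kierstead's algorithm with threshold `k = ⌊√n⌋ + 1`. An arriving vertex `v` that has an earlier
neighbour adjacent to an earlier center takes the color `k + w` of the first such center `w`;
otherwise, if `v` has at least `k` earlier neighbours, it becomes a center with the private
color `k + v`; otherwise it is colored first-fit from `{0, …, k - 1}`. All of this only looks at
the vertices `≤ v`, so it is an online algorithm.

Two adjacent vertices with the same color `k + w` would close, through `w`, an odd cycle of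
length 3 or 5, impossible at odd girth 7. Distinct centers have disjoint sets of earlier
neighbours, each of size at least `k`, so there are at most `n / k < k` centers and at most
`2k - 1 ≤ 3√n` colors in all.
-/

open SimpleGraph Finset

theorem Fin.exists_lt_castLE_iff {m n : ℕ} (h : m ≤ n) (v : Fin m) (P : Fin n → Prop) :
    (∃ b < Fin.castLE h v, P b) ↔ ∃ a < v, P (Fin.castLE h a) :=
  ⟨fun ⟨b, hb, hP⟩ => ⟨⟨b, Nat.lt_trans hb v.isLt⟩, hb, hP⟩, fun ⟨_, ha, hP⟩ => ⟨_, ha, hP⟩⟩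

theorem Fin.forall_lt_castLE_iff {m n : ℕ} (h : m ≤ n) (v : Fin m) (P : Fin n → Prop) :
    (∀ b < Fin.castLE h v, P b) ↔ ∀ a < v, P (Fin.castLE h a) :=
  ⟨fun H _ ha => H _ ha, fun H b hb => H ⟨b, Nat.lt_trans hb v.isLt⟩ hb⟩

namespace OddGirthAtLeast

variable {V : Type*} {G : SimpleGraph V}

theorem not_adj_of_adj_of_adj (hg : OddGirthAtLeast G 7) {x y z : V}
    (hxy : G.Adj x y) (hyz : G.Adj y z) : ¬ G.Adj z x := fun hzx => by
  have hcycle : (Walk.cons hxy (.cons hyz (.cons hzx .nil))).IsCycle := by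
    rw [Walk.cons_isCycle_iff]
    simp [Walk.isPath_def, hxy.ne', hyz.ne, hzx.ne, hzx.ne']
  have := hg x _ hcycle ⟨1, rfl⟩
  norm_num at this

theorem no_pentagon (hg : OddGirthAtLeast G 7) {a b c d e : V}
    (hab : G.Adj a b) (hbc : G.Adj b c) (hcd : G.Adj c d) (hde : G.Adj d e) (hea : G.Adj e a)
    (hac : a ≠ c) (had : a ≠ d) (hbd : b ≠ d) (hbe : b ≠ e) (hce : c ≠ e) : False := by
  have hcycle : (Walk.cons hab (.cons hbc (.cons hcd (.cons hde (.cons hea .nil))))).IsCycle := by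
    rw [Walk.cons_isCycle_iff]
    simp [Walk.isPath_def, hab.ne', hbc.ne, hcd.ne, hde.ne, hea.ne, hea.ne', hac, hac.symm,
      had.symm, hbd, hbe, hce]
  have := hg a _ hcycle ⟨2, rfl⟩
  norm_num at this

theorem not_adj_of_two_step (hg : OddGirthAtLeast G 7) {w a b u v : V}
    (hwa : G.Adj w a) (hav : G.Adj a v) (hwb : G.Adj w b) (hbu : G.Adj b u)
    (hu : u ≠ w) (hv : v ≠ w) : ¬ G.Adj u v := fun huv => by
  by_cases hab : a = b
  · subst hab
    exact hg.not_adj_of_adj_of_adj hbu huv hav.symm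
  by_cases hau : a = u
  · subst hau
    exact hg.not_adj_of_adj_of_adj hwb hbu hwa.symm
  by_cases hbv : b = v
  · subst hbv
    exact hg.not_adj_of_adj_of_adj hwa hav hwb.symm
  exact hg.no_pentagon hwa hav huv.symm hbu.symm hwb.symm hv.symm hu.symm hau hab (Ne.symm hbv)

end OddGirthAtLeast

namespace Kierstead

variable {n : ℕ}

open scoped Classical in
noncomputable def earlierNeighbors (G : SimpleGraph (Fin n)) (v : Fin n) : Finset (Fin n) :=
  univ.filter fun a => a < v ∧ G.Adj a v

theorem mem_earlierNeighbors {G : SimpleGraph (Fin n)} {v a : Fin n} :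
    a ∈ earlierNeighbors G v ↔ a < v ∧ G.Adj a v := by
  simp [earlierNeighbors]

def SharesEarlierNeighbor (G : SimpleGraph (Fin n)) (v u : Fin n) : Prop :=
  ∃ a < v, G.Adj a v ∧ G.Adj a u

def IsCenter (G : SimpleGraph (Fin n)) (k : ℕ) (v : Fin n) : Prop :=
  k ≤ #(earlierNeighbors G v) ∧ ∀ u < v, IsCenter G k u → ¬ SharesEarlierNeighbor G v u
termination_by v.1
decreasing_by exact ‹u < v›

theorem isCenter_iff {G : SimpleGraph (Fin n)} {k : ℕ} {v : Fin n} :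
    IsCenter G k v ↔
      k ≤ #(earlierNeighbors G v) ∧ ∀ u < v, IsCenter G k u → ¬ SharesEarlierNeighbor G v u := by
  rw [IsCenter]

open scoped Classical in
noncomputable def color (G : SimpleGraph (Fin n)) (k : ℕ) (v : Fin n) : ℕ :=
  if ∃ u < v, IsCenter G k u ∧ SharesEarlierNeighbor G v u then
    k + sInf {j | ∃ u < v, u.1 = j ∧ IsCenter G k u ∧ SharesEarlierNeighbor G v u}
  else if k ≤ #(earlierNeighbors G v) then k + v
  else sInf {c | c < k ∧ ∀ a < v, G.Adj a v → color G k a ≠ c}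
termination_by v.1
decreasing_by exact ‹a < v›

section comap

variable {m : ℕ} (h : m ≤ n) (G : SimpleGraph (Fin n)) (k : ℕ)

theorem card_earlierNeighbors_comap (v : Fin m) :
    #(earlierNeighbors (G.comap (Fin.castLE h)) v) = #(earlierNeighbors G (Fin.castLE h v)) := by
  rw [← card_map (Fin.castLEEmb h)]
  congr 1
  ext b
  simp only [mem_map, mem_earlierNeighbors, comap_adj, Fin.castLEEmb_apply]
  constructor
  · rintro ⟨a, ⟨hav, hadj⟩, rfl⟩
    exact ⟨hav, hadj⟩
  · rintro ⟨hbv, hadj⟩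
    exact ⟨⟨b, Nat.lt_trans hbv v.isLt⟩, ⟨hbv, hadj⟩, rfl⟩

theorem sharesEarlierNeighbor_comap (v u : Fin m) :
    SharesEarlierNeighbor (G.comap (Fin.castLE h)) v u ↔
      SharesEarlierNeighbor G (Fin.castLE h v) (Fin.castLE h u) := by
  simp only [SharesEarlierNeighbor, Fin.exists_lt_castLE_iff, comap_adj]

theorem isCenter_comap (v : Fin m) :
    IsCenter (G.comap (Fin.castLE h)) k v ↔ IsCenter G k (Fin.castLE h v) := by
  induction v using WellFoundedLT.induction with
  | ind v ih =>
    rw [isCenter_iff, isCenter_iff, card_earlierNeighbors_comap, Fin.forall_lt_castLE_iff]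
    simp +contextual only [ih, sharesEarlierNeighbor_comap]

open scoped Classical in
theorem color_comap (v : Fin m) :
    color (G.comap (Fin.castLE h)) k v = color G k (Fin.castLE h v) := by
  induction v using WellFoundedLT.induction with
  | ind v ih =>
    rw [color, color]
    simp +contextual only [ih, isCenter_comap, sharesEarlierNeighbor_comap, comap_adj,
      card_earlierNeighbors_comap, Fin.exists_lt_castLE_iff, Fin.forall_lt_castLE_iff,
      Fin.val_castLE]

end comap

variable {G : SimpleGraph (Fin n)} {k : ℕ}

theorem exists_free_color {v : Fin n} (hv : #(earlierNeighbors G v) < k) :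
    ∃ c < k, ∀ a < v, G.Adj a v → color G k a ≠ c := by
  classical
  have hcard : #((earlierNeighbors G v).image (color G k)) < #(range k) :=
    card_image_le.trans_lt (by rwa [card_range])
  obtain ⟨c, hck, hc⟩ := exists_mem_notMem_of_card_lt_card hcard
  refine ⟨c, mem_range.1 hck, fun a hav hadj hac => hc ?_⟩
  exact mem_image.2 ⟨a, mem_earlierNeighbors.2 ⟨hav, hadj⟩, hac⟩

theorem color_cases (G : SimpleGraph (Fin n)) (k : ℕ) (v : Fin n) :
    (color G k v < k ∧ ∀ a < v, G.Adj a v → color G k a ≠ color G k v) ∨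
      ∃ w, IsCenter G k w ∧ color G k v = k + w ∧
        (w = v ∨ w < v ∧ SharesEarlierNeighbor G v w) := by
  rw [color]
  split_ifs with hnear hdeg
  · obtain ⟨u, hu⟩ := hnear
    obtain ⟨w, hwv, hw, hcenter, hshare⟩ := Nat.sInf_mem (s := {j | ∃ u < v, u.1 = j ∧
      IsCenter G k u ∧ SharesEarlierNeighbor G v u}) ⟨u, u, hu.1, rfl, hu.2⟩
    exact .inr ⟨w, hcenter, by rw [hw], .inr ⟨hwv, hshare⟩⟩
  · have hcenter : IsCenter G k v :=
      isCenter_iff.2 ⟨hdeg, fun u hu hcenter hshare => hnear ⟨u, hu, hcenter, hshare⟩⟩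
    exact .inr ⟨v, hcenter, rfl, .inl rfl⟩
  · exact .inl (Nat.sInf_mem (exists_free_color (not_le.1 hdeg)))

theorem color_ne_of_adj_of_lt (hg : OddGirthAtLeast G 7) {u v : Fin n} (huv : u < v)
    (hadj : G.Adj u v) : color G k u ≠ color G k v := by
  rcases color_cases G k v with ⟨-, hfree⟩ | ⟨w, -, hv, hwv⟩
  · exact hfree u huv hadj
  rcases color_cases G k u with ⟨hu, -⟩ | ⟨w', -, hu, hwu⟩
  · omega
  rw [hu, hv]
  intro heq
  obtain rfl : w' = w := Fin.ext (by omega)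
  rcases hwv with rfl | ⟨hwv, a, -, hav, haw⟩ <;> rcases hwu with rfl | ⟨hwu, b, -, hbu, hbw⟩
  · exact huv.ne rfl
  · exact (hwu.trans huv).false
  · exact hg.not_adj_of_adj_of_adj hadj hav.symm haw
  · exact hg.not_adj_of_two_step haw.symm hav hbw.symm hbu hwu.ne' hwv.ne' hadj

theorem color_ne_of_adj (hg : OddGirthAtLeast G 7) {u v : Fin n} (hadj : G.Adj u v) :
    color G k u ≠ color G k v := by
  rcases hadj.ne.lt_or_gt with h | h
  · exact color_ne_of_adj_of_lt hg h hadj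
  · exact (color_ne_of_adj_of_lt hg h hadj.symm).symm

theorem IsCenter.le_card_earlierNeighbors {v : Fin n} (hv : IsCenter G k v) :
    k ≤ #(earlierNeighbors G v) :=
  (isCenter_iff.1 hv).1

theorem IsCenter.not_sharesEarlierNeighbor {u v : Fin n} (hv : IsCenter G k v) (huv : u < v)
    (hu : IsCenter G k u) : ¬ SharesEarlierNeighbor G v u :=
  (isCenter_iff.1 hv).2 u huv hu

theorem disjoint_earlierNeighbors_of_isCenter {u w : Fin n} (hu : IsCenter G k u)
    (hw : IsCenter G k w) (huw : u < w) :
    Disjoint (earlierNeighbors G u) (earlierNeighbors G w) := by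
  refine Finset.disjoint_left.2 fun a hau haw => ?_
  rw [mem_earlierNeighbors] at hau haw
  exact hw.not_sharesEarlierNeighbor huw hu ⟨a, haw.1, haw.2, hau.2⟩

open scoped Classical in
theorem card_centers_mul_le (G : SimpleGraph (Fin n)) (k : ℕ) :
    #(univ.filter (IsCenter G k)) * k ≤ n := by
  set centers := univ.filter (IsCenter G k)
  have hdisj : (centers : Set (Fin n)).PairwiseDisjoint (earlierNeighbors G) := by
    intro u hu w hw huw
    simp only [centers, coe_filter, mem_univ, true_and, Set.mem_ofPred_eq] at hu hw
    rcases huw.lt_or_gt with h | h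
    · exact disjoint_earlierNeighbors_of_isCenter hu hw h
    · exact (disjoint_earlierNeighbors_of_isCenter hw hu h).symm
  calc #centers * k ≤ ∑ w ∈ centers, #(earlierNeighbors G w) := by
        rw [← smul_eq_mul]
        exact card_nsmul_le_sum _ _ _ fun w hw => (mem_filter.1 hw).2.le_card_earlierNeighbors
    _ = #(centers.biUnion (earlierNeighbors G)) := (card_biUnion hdisj).symm
    _ ≤ n := card_le_univ _ |>.trans_eq (Fintype.card_fin n)

open scoped Classical in
theorem card_image_color_le (G : SimpleGraph (Fin n)) (k : ℕ) :
    #(univ.image (color G k)) ≤ k + #(univ.filter (IsCenter G k)) := by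
  have hsub : univ.image (color G k) ⊆ range k ∪ (univ.filter (IsCenter G k)).image (k + ·.1) := by
    simp only [subset_iff, mem_image, mem_univ, true_and, mem_union, mem_range, mem_filter]
    rintro _ ⟨v, rfl⟩
    rcases color_cases G k v with ⟨hv, -⟩ | ⟨w, hw, hv, -⟩
    · exact .inl hv
    · exact .inr ⟨w, hw, hv.symm⟩
  calc #(univ.image (color G k))
      ≤ #(range k) + #((univ.filter (IsCenter G k)).image (k + ·.1)) :=
        (card_le_card hsub).trans (card_union_le _ _)
    _ ≤ k + #(univ.filter (IsCenter G k)) := by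
        rw [card_range]
        exact Nat.add_le_add_left card_image_le _

theorem card_image_color_sqrt_succ_le (G : SimpleGraph (Fin n)) :
    #(univ.image (color G (n.sqrt + 1))) ≤ 2 * n.sqrt + 1 := by
  classical
  have hcenters : #(univ.filter (IsCenter G (n.sqrt + 1))) ≤ n.sqrt := by
    by_contra! h
    have := (Nat.mul_le_mul h le_rfl).trans (card_centers_mul_le G (n.sqrt + 1))
    exact (Nat.lt_succ_sqrt n).not_ge this
  have := card_image_color_le G (n.sqrt + 1)
  omega

noncomputable def algorithm (n k : ℕ) : (t : Fin n) → SimpleGraph (Fin (t.1 + 1)) → ℕ :=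
  fun t H => color H k (Fin.last t)

theorem onlineColoring_algorithm (n k : ℕ) (G : SimpleGraph (Fin n)) :
    onlineColoring (algorithm n k) G = color G k := by
  funext v
  have hlast : Fin.castLE v.isLt (Fin.last v) = v := Fin.ext (by simp)
  rw [onlineColoring, algorithm, color_comap, hlast]

end Kierstead

/-- Kierstead's theorem: graphs with odd girth at least 7 can be deterministically
colored online using `O(n^(1/2))` colors. -/
theorem online_coloring_of_odd_girth_7 :
    ∃ C : ℝ, 0 < C ∧
      ∀ n : ℕ, 1 ≤ n →
        ∃ A : (t : Fin n) → SimpleGraph (Fin (t.1 + 1)) → ℕ,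
          ∀ G : SimpleGraph (Fin n), OddGirthAtLeast G 7 →
            ProperlyColorsWithin G (onlineColoring A G) (C * (n : ℝ) ^ ((1 : ℝ) / 2)) := by
  refine ⟨3, by norm_num, fun n hn => ⟨Kierstead.algorithm n (n.sqrt + 1), fun G hg => ?_⟩⟩
  rw [Kierstead.onlineColoring_algorithm]
  refine ⟨fun u v => Kierstead.color_ne_of_adj hg, ?_⟩
  have hcard : (#(univ.image (Kierstead.color G (n.sqrt + 1))) : ℝ) ≤ 2 * n.sqrt + 1 := by
    exact_mod_cast Kierstead.card_image_color_sqrt_succ_le G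
  have hsqrt : (n.sqrt : ℝ) ≤ √n := Real.nat_sqrt_le_real_sqrt
  have hone : 1 ≤ √(n : ℝ) := Real.one_le_sqrt.2 (by exact_mod_cast hn)
  rw [← Real.sqrt_eq_rpow]
  linarith
end

section
/- For every natural number Δ ≥ 1 there exists a deterministic online group coloring algorithm using at most Δ² + 2 colors. Precisely: there is a family of functions A_t : SimpleGraph (Fin (t+1)) × (Fin (t+1) → ℕ) → ℕ, defined for all t ∈ ℕ, such that for every n ≥ 1, every simple graph G on Fin n, and every group assignment γ : Fin n → ℕ satisfying (i) γ(u) = γ(v) implies u and v are not adjacent in G, and (ii) for every vertex v : Fin n, the number of groups j ≠ γ(v) for which there exist vertices u, w ≤ v with γ(u) = γ(v), γ(w) = j, and u adjacent to w in G is at most Δ, the coloring c(v) = A_v(G_v, γ_v) — where G_v is the induced subgraph of G on {0, …, v} and γ_v is the restriction of γ to {0, …, v} — is a proper coloring of G and satisfies 1 ≤ c(v) ≤ Δ² + 2 for all v. -/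
/-!
A vertex whose group already has members keeps the color of the latest one unless one of its
back-neighbours uses that color; otherwise it takes the least color in `[1, Δ² + 1]` not used
so far by a group adjacent to its own. A vertex opening a new group with no back-neighbour
gets the reserved color `Δ² + 2`.

A group only changes color when some group adjacent to it now was not adjacent to it at its
previous change: a color chosen at that change avoided the colors of all groups adjacent at
the time, so the conflicting back-neighbour's group was not among them. Since the current
neighbourhood of a group has at most `Δ` groups, each group uses at most `Δ` colors besides
`Δ² + 2`, so at most `Δ · Δ` colors of `[1, Δ² + 1]` are ever forbidden and a fresh color
always exists.
-/

/-- The color that the online group coloring algorithm `A` assigns to vertex `v` of `G`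
with group assignment `γ`: `A` sees the induced subgraph of `G` on `{0, …, v}` together
with the groups of the vertices `0, …, v`. -/
def groupColoring {n : ℕ} (A : (t : ℕ) → SimpleGraph (Fin (t + 1)) × (Fin (t + 1) → ℕ) → ℕ)
    (G : SimpleGraph (Fin n)) (γ : Fin n → ℕ) (v : Fin n) : ℕ :=
  A v.1 (G.comap (Fin.castLE v.isLt), γ ∘ Fin.castLE v.isLt)

namespace OnlineGroupColoring

section Rule

variable (Δ : ℕ) (G : SimpleGraph ℕ) (γ c : ℕ → ℕ)

def nbrGroups (v : ℕ) : Set ℕ :=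
  {j | j ≠ γ v ∧ ∃ u ≤ v, ∃ w ≤ v, γ u = γ v ∧ γ w = j ∧ G.Adj u w}

def HasPrev (v : ℕ) : Prop := ∃ k < v, γ k = γ v

/-- Meaningful only under `HasPrev γ v`; otherwise it is `sSup ∅ = 0`. -/
noncomputable def prev (v : ℕ) : ℕ := sSup {k | k < v ∧ γ k = γ v}

def Keeps (v : ℕ) : Prop := HasPrev γ v ∧ ∀ u < v, G.Adj u v → c u ≠ c (prev γ v)

def IsolatedFromPast (v : ℕ) : Prop := ∀ u < v, ¬ G.Adj u v

def forbidden (v : ℕ) : Set ℕ := c '' {w | w < v ∧ γ w ∈ nbrGroups G γ v}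

noncomputable def freshColor (v : ℕ) : ℕ := sInf (Set.Icc 1 (Δ ^ 2 + 1) \ forbidden G γ c v)

def FreshAvailable (v : ℕ) : Prop := (Set.Icc 1 (Δ ^ 2 + 1) \ forbidden G γ c v).Nonempty

open Classical in
noncomputable def step (v : ℕ) : ℕ :=
  if Keeps G γ c v then c (prev γ v)
  else if IsolatedFromPast G v then Δ ^ 2 + 2
  else freshColor Δ G γ c v

noncomputable def colors : ℕ → ℕ
  | v => step Δ G γ (fun k => if k < v then colors k else 0) v

end Rule

variable {Δ : ℕ} {G : SimpleGraph ℕ} {γ c : ℕ → ℕ} {v : ℕ}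

theorem prev_lt_and_eq (h : HasPrev γ v) : prev γ v < v ∧ γ (prev γ v) = γ v :=
  Nat.sSup_mem h ⟨v, fun _ hk => hk.1.le⟩

theorem le_prev {k : ℕ} (hk : k < v) (hγk : γ k = γ v) : k ≤ prev γ v :=
  le_csSup ⟨v, fun _ hk' => hk'.1.le⟩ ⟨hk, hγk⟩

section Congr

variable {G' : SimpleGraph ℕ} {γ' c' : ℕ → ℕ}

theorem nbrGroups_congr (hG : ∀ a ≤ v, ∀ b ≤ v, (G.Adj a b ↔ G'.Adj a b))
    (hγ : ∀ a ≤ v, γ a = γ' a) : nbrGroups G γ v = nbrGroups G' γ' v := by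
  ext j
  simp only [nbrGroups, Set.mem_ofPred_eq]
  grind

theorem hasPrev_congr (hγ : ∀ a ≤ v, γ a = γ' a) : HasPrev γ v ↔ HasPrev γ' v := by
  unfold HasPrev
  grind

theorem prev_congr (hγ : ∀ a ≤ v, γ a = γ' a) : prev γ v = prev γ' v := by
  unfold prev
  congr 1
  ext k
  grind

theorem keeps_congr (hG : ∀ a ≤ v, ∀ b ≤ v, (G.Adj a b ↔ G'.Adj a b))
    (hγ : ∀ a ≤ v, γ a = γ' a) (hc : ∀ k < v, c k = c' k) :
    Keeps G γ c v ↔ Keeps G' γ' c' v := by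
  rw [Keeps, Keeps, ← hasPrev_congr hγ, ← prev_congr hγ]
  refine and_congr_right fun h => ?_
  have := (prev_lt_and_eq h).1
  grind

theorem step_congr (hG : ∀ a ≤ v, ∀ b ≤ v, (G.Adj a b ↔ G'.Adj a b))
    (hγ : ∀ a ≤ v, γ a = γ' a) (hc : ∀ k < v, c k = c' k) :
    step Δ G γ c v = step Δ G' γ' c' v := by
  have hN := nbrGroups_congr hG hγ
  have hf : forbidden G γ c v = forbidden G' γ' c' v := by
    ext x
    simp only [forbidden, Set.mem_image, Set.mem_ofPred_eq, hN]
    grind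
  have hI : IsolatedFromPast G v ↔ IsolatedFromPast G' v := by
    unfold IsolatedFromPast
    grind
  unfold step freshColor
  by_cases hk : Keeps G γ c v
  · rw [if_pos hk, if_pos ((keeps_congr hG hγ hc).1 hk), ← prev_congr hγ,
      hc _ (prev_lt_and_eq hk.1).1]
  · rw [if_neg hk, if_neg (mt (keeps_congr hG hγ hc).2 hk), hI, hf]

theorem colors_eq_step (v : ℕ) : colors Δ G γ v = step Δ G γ (colors Δ G γ) v := by
  rw [colors]
  exact step_congr (fun _ _ _ _ => Iff.rfl) (fun _ _ => rfl) (fun _ hk => if_pos hk)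

theorem colors_congr (hG : ∀ a ≤ v, ∀ b ≤ v, (G.Adj a b ↔ G'.Adj a b))
    (hγ : ∀ a ≤ v, γ a = γ' a) : colors Δ G γ v = colors Δ G' γ' v := by
  induction v using Nat.strong_induction_on with
  | _ v ih =>
    rw [colors_eq_step, colors_eq_step]
    refine step_congr hG hγ fun k hk => ih k hk ?_ ?_
    · exact fun a ha b hb => hG a (ha.trans hk.le) b (hb.trans hk.le)
    · exact fun a ha => hγ a (ha.trans hk.le)

end Congr

section Analysis

variable {n a u x y : ℕ}

theorem freshColor_mem (h : FreshAvailable Δ G γ c v) :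
    freshColor Δ G γ c v ∈ Set.Icc 1 (Δ ^ 2 + 1) \ forbidden G γ c v :=
  Nat.sInf_mem h

theorem mem_forbidden {w : ℕ} (hw : w < v) (hj : γ w ∈ nbrGroups G γ v) :
    c w ∈ forbidden G γ c v :=
  ⟨w, ⟨hw, hj⟩, rfl⟩

theorem mem_nbrGroups_of_adj (hind : ∀ a b, γ a = γ b → ¬ G.Adj a b) (huv : u ≤ v)
    (h : G.Adj u v) : γ u ∈ nbrGroups G γ v :=
  ⟨fun hγ => hind u v hγ h, v, le_rfl, u, huv, rfl, rfl, h.symm⟩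

theorem nbrGroups_mono (hxy : x ≤ y) (hγ : γ x = γ y) :
    nbrGroups G γ x ⊆ nbrGroups G γ y := by
  rintro j ⟨hj, u, hu, w, hw, hγu, hγw, h⟩
  exact ⟨hγ ▸ hj, u, hu.trans hxy, w, hw.trans hxy, hγ ▸ hγu, hγw, h⟩

theorem mem_nbrGroups_swap (hxy : x ≤ y) (h : γ y ∈ nbrGroups G γ x) :
    γ x ∈ nbrGroups G γ y := by
  obtain ⟨hne, u, hu, w, hw, hγu, hγw, hadj⟩ := h
  exact ⟨Ne.symm hne, w, hw.trans hxy, u, hu.trans hxy, hγw, hγu, hadj.symm⟩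

theorem nbrGroups_finite (v : ℕ) : (nbrGroups G γ v).Finite :=
  ((Set.finite_Iic v).image γ).subset fun _ ⟨_, _, _, w, hw, _, hγw, _⟩ => ⟨w, hw, hγw⟩

theorem exists_conflict_of_not_keeps (hk : ¬ Keeps G γ c v) (hprev : HasPrev γ v) :
    ∃ u < v, G.Adj u v ∧ c u = c (prev γ v) := by
  simpa [Keeps, hprev] using hk

theorem not_isolatedFromPast_of_mem_nbrGroups (hk : ¬ Keeps G γ c v) {j : ℕ}
    (hj : j ∈ nbrGroups G γ v) : ¬ IsolatedFromPast G v := by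
  intro hiso
  by_cases hprev : HasPrev γ v
  · obtain ⟨u, hu, hadj, -⟩ := exists_conflict_of_not_keeps hk hprev
    exact hiso u hu hadj
  · obtain ⟨hjv, u, hu, w, hw, hγu, hγw, hadj⟩ := hj
    obtain rfl : u = v := hu.eq_or_lt.resolve_right fun h => hprev ⟨u, h, hγu⟩
    exact hiso w (hw.lt_of_ne fun h => hjv (h ▸ hγw.symm)) hadj.symm

variable (hc : ∀ v, c v = step Δ G γ c v)
include hc

theorem eq_prev_of_keeps (hk : Keeps G γ c v) : c v = c (prev γ v) := by
  rw [hc, step, if_pos hk]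

theorem eq_of_isolatedFromPast (hk : ¬ Keeps G γ c v) (hiso : IsolatedFromPast G v) :
    c v = Δ ^ 2 + 2 := by
  rw [hc, step, if_neg hk, if_pos hiso]

theorem eq_freshColor (hk : ¬ Keeps G γ c v) (hiso : ¬ IsolatedFromPast G v) :
    c v = freshColor Δ G γ c v := by
  rw [hc, step, if_neg hk, if_neg hiso]

theorem exists_last_not_keeps (v : ℕ) :
    ∃ a ≤ v, γ a = γ v ∧ c a = c v ∧ ¬ Keeps G γ c a ∧
      ∀ b, a < b → b ≤ v → γ b = γ v → Keeps G γ c b := by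
  induction v using Nat.strong_induction_on with
  | _ v ih =>
    by_cases hk : Keeps G γ c v
    · obtain ⟨hlt, hγp⟩ := prev_lt_and_eq hk.1
      obtain ⟨a, hap, hγa, hca, hka, hlast⟩ := ih _ hlt
      refine ⟨a, hap.trans hlt.le, hγa.trans hγp, hca.trans (eq_prev_of_keeps hc hk).symm, hka,
        fun b hab hbv hγb => ?_⟩
      rcases hbv.eq_or_lt with rfl | hbv
      · exact hk
      · exact hlast b hab (le_prev hbv hγb) (hγb.trans hγp.symm)
    · exact ⟨v, le_rfl, rfl, rfl, hk, fun b hvb hbv _ => absurd hvb hbv.not_gt⟩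

theorem color_ne_of_lt_of_mem_nbrGroups (hfresh : FreshAvailable Δ G γ c y)
    (hk : ¬ Keeps G γ c y) (hxy : x < y) (hx : γ x ∈ nbrGroups G γ y) : c x ≠ c y := by
  rw [eq_freshColor hc hk (not_isolatedFromPast_of_mem_nbrGroups hk hx)]
  intro h
  exact (freshColor_mem hfresh).2 (h ▸ mem_forbidden hxy hx)

theorem color_ne_of_not_keeps (hfx : FreshAvailable Δ G γ c x)
    (hfy : FreshAvailable Δ G γ c y) (hkx : ¬ Keeps G γ c x) (hky : ¬ Keeps G γ c y)
    (h : γ x ∈ nbrGroups G γ y) : c x ≠ c y := by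
  rcases lt_or_gt_of_ne (ne_of_apply_ne γ h.1) with hxy | hyx
  · exact color_ne_of_lt_of_mem_nbrGroups hc hfy hky hxy h
  · exact (color_ne_of_lt_of_mem_nbrGroups hc hfx hkx hyx (mem_nbrGroups_swap hyx.le h)).symm

variable (hind : ∀ a b, γ a = γ b → ¬ G.Adj a b)
include hind

theorem exists_new_nbrGroup (hfresh : ∀ w < a, FreshAvailable Δ G γ c w)
    (hk : ¬ Keeps G γ c a) (hres : c a ≠ Δ ^ 2 + 2) :
    ∃ j ∈ nbrGroups G γ a, ∀ a₀ < a, γ a₀ = γ a → ¬ Keeps G γ c a₀ →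
      j ∉ nbrGroups G γ a₀ := by
  have hiso : ¬ IsolatedFromPast G a := fun hiso => hres (eq_of_isolatedFromPast hc hk hiso)
  by_cases hprev : HasPrev γ a
  · obtain ⟨u, hu, hadj, hcu⟩ := exists_conflict_of_not_keeps hk hprev
    obtain ⟨hpa, hγp⟩ := prev_lt_and_eq hprev
    obtain ⟨p, hp, hγp', hcp, hkp, hlast⟩ := exists_last_not_keeps hc (prev γ a)
    -- `p` chose the color that `u` now shares with the group of `a`. Had the two groups met by
    -- time `p`, the later of this choice and the one behind `u`'s color would have avoided it.
    have hnew : γ u ∉ nbrGroups G γ p := by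
      intro hmem
      obtain ⟨b, hb, hγb, hcb, hkb, -⟩ := exists_last_not_keeps hc u
      refine color_ne_of_not_keeps hc (hfresh b (by omega)) (hfresh p (by omega)) hkb hkp
        (by rwa [hγb]) ?_
      rw [hcb, hcu, hcp]
    refine ⟨γ u, mem_nbrGroups_of_adj hind hu.le hadj, fun a₀ ha₀ hγa₀ hka₀ hmem => hnew ?_⟩
    have ha₀p : a₀ ≤ p := by
      by_contra! h
      exact hka₀ (hlast a₀ h (le_prev ha₀ hγa₀) (hγa₀.trans hγp.symm))
    exact nbrGroups_mono ha₀p (hγa₀.trans (hγp'.trans hγp).symm) hmem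
  · obtain ⟨u, hu, hadj⟩ : ∃ u < a, G.Adj u a := by simpa [IsolatedFromPast] using hiso
    exact ⟨γ u, mem_nbrGroups_of_adj hind hu.le hadj,
      fun a₀ ha₀ hγa₀ _ _ => hprev ⟨a₀, ha₀, hγa₀⟩⟩

variable (hdeg : ∀ w < n, (nbrGroups G γ w).ncard ≤ Δ)
include hdeg

theorem ncard_recolorings_le (hv : v ≤ n) (hfresh : ∀ w < v, FreshAvailable Δ G γ c w)
    (j : ℕ) : {a | a < v ∧ γ a = j ∧ ¬ Keeps G γ c a ∧ c a ≠ Δ ^ 2 + 2}.ncard ≤ Δ := by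
  set S := {a | a < v ∧ γ a = j ∧ ¬ Keeps G γ c a ∧ c a ≠ Δ ^ 2 + 2}
  rcases S.eq_empty_or_nonempty with hS | hS
  · simp [hS]
  have hbdd : BddAbove S := ⟨v, fun a ha => ha.1.le⟩
  have hA : sSup S ∈ S := Nat.sSup_mem hS hbdd
  choose! f hfN hfnew using fun a (ha : a ∈ S) =>
    exists_new_nbrGroup hc hind (fun w hw => hfresh w (hw.trans ha.1)) ha.2.2.1 ha.2.2.2
  have hmaps : Set.MapsTo f S (nbrGroups G γ (sSup S)) := fun a ha =>
    nbrGroups_mono (le_csSup hbdd ha) (ha.2.1.trans hA.2.1.symm) (hfN a ha)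
  have hinj : Set.InjOn f S := by
    intro a ha b hb hab
    by_contra hne
    rcases lt_or_gt_of_ne hne with h | h
    · exact hfnew b hb a h (ha.2.1.trans hb.2.1.symm) ha.2.2.1 (hab ▸ hfN a ha)
    · exact hfnew a ha b h (hb.2.1.trans ha.2.1.symm) hb.2.2.1 (hab ▸ hfN b hb)
  calc S.ncard ≤ (nbrGroups G γ (sSup S)).ncard :=
        Set.ncard_le_ncard_of_injOn f hmaps hinj (nbrGroups_finite _)
    _ ≤ Δ := hdeg _ (hA.1.trans_le hv)

theorem ncard_groupColors_le (hv : v ≤ n) (hfresh : ∀ w < v, FreshAvailable Δ G γ c w)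
    (j : ℕ) : (c '' {w | w < v ∧ γ w = j} \ {Δ ^ 2 + 2}).ncard ≤ Δ := by
  set S := {a | a < v ∧ γ a = j ∧ ¬ Keeps G γ c a ∧ c a ≠ Δ ^ 2 + 2}
  have hsub : c '' {w | w < v ∧ γ w = j} \ {Δ ^ 2 + 2} ⊆ c '' S := by
    rintro _ ⟨⟨w, ⟨hw, hγw⟩, rfl⟩, hres⟩
    obtain ⟨a, haw, hγa, hca, hka, -⟩ := exists_last_not_keeps hc w
    exact ⟨a, ⟨haw.trans_lt hw, hγa.trans hγw, hka, hca ▸ hres⟩, hca⟩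
  have hfin : S.Finite := (Set.finite_Iio v).subset fun a ha => ha.1
  calc _ ≤ (c '' S).ncard := Set.ncard_le_ncard hsub (hfin.image c)
    _ ≤ S.ncard := Set.ncard_image_le hfin
    _ ≤ Δ := ncard_recolorings_le hc hind hdeg hv hfresh j

theorem freshAvailable_of_lt : ∀ v < n, FreshAvailable Δ G γ c v := by
  intro v
  induction v using Nat.strong_induction_on with
  | _ v ih =>
  intro hv
  have hfresh : ∀ w < v, FreshAvailable Δ G γ c w := fun w hw => ih w hw (hw.trans hv)
  set N := (nbrGroups_finite (G := G) (γ := γ) v).toFinset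
  set T := fun j => c '' {w | w < v ∧ γ w = j} \ {Δ ^ 2 + 2}
  have hsub : Set.Icc 1 (Δ ^ 2 + 1) ∩ forbidden G γ c v ⊆ ⋃ j ∈ N, T j := by
    rintro _ ⟨hx, ⟨w, ⟨hw, hj⟩, rfl⟩⟩
    simp only [Set.mem_iUnion]
    refine ⟨γ w, (Set.Finite.mem_toFinset _).2 hj, ⟨w, ⟨hw, rfl⟩, rfl⟩, ?_⟩
    rw [Set.mem_singleton_iff]
    exact fun h => by simp [h] at hx
  have hTfin : (⋃ j ∈ N, T j).Finite := N.finite_toSet.biUnion fun j _ =>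
    (((Set.finite_Iio v).subset fun w hw => hw.1).image c).sdiff
  have hcard : (Set.Icc 1 (Δ ^ 2 + 1) ∩ forbidden G γ c v).ncard ≤ Δ * Δ := calc
    _ ≤ (⋃ j ∈ N, T j).ncard := Set.ncard_le_ncard hsub hTfin
    _ ≤ ∑ j ∈ N, (T j).ncard := Finset.set_ncard_biUnion_le _ _
    _ ≤ N.card * Δ := Finset.sum_le_card_nsmul _ _ _ fun j _ =>
        ncard_groupColors_le hc hind hdeg hv.le hfresh j
    _ ≤ Δ * Δ := by
        rw [← Set.ncard_eq_toFinset_card _ (nbrGroups_finite v)]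
        exact Nat.mul_le_mul_right Δ (hdeg v hv)
  by_contra hempty
  rw [FreshAvailable, Set.not_nonempty_iff_eq_empty, Set.sdiff_eq_empty, ← Set.inter_eq_left]
    at hempty
  rw [hempty, Set.ncard_Icc_nat, Nat.add_sub_cancel, sq] at hcard
  omega

theorem color_mem_Icc : ∀ v < n, c v ∈ Set.Icc 1 (Δ ^ 2 + 2) := by
  intro v
  induction v using Nat.strong_induction_on with
  | _ v ih =>
  intro hv
  by_cases hk : Keeps G γ c v
  · have hp := (prev_lt_and_eq hk.1).1
    rw [eq_prev_of_keeps hc hk]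
    exact ih _ hp (hp.trans hv)
  by_cases hiso : IsolatedFromPast G v
  · rw [eq_of_isolatedFromPast hc hk hiso]
    exact ⟨by omega, le_rfl⟩
  · rw [eq_freshColor hc hk hiso]
    obtain ⟨⟨h1, h2⟩, -⟩ := freshColor_mem (freshAvailable_of_lt hc hind hdeg v hv)
    exact ⟨h1, by omega⟩

theorem color_ne_of_adj_of_lt (hv : v < n) (huv : u < v) (h : G.Adj u v) : c u ≠ c v := by
  by_cases hk : Keeps G γ c v
  · rw [eq_prev_of_keeps hc hk]
    exact hk.2 u huv h
  · exact color_ne_of_lt_of_mem_nbrGroups hc (freshAvailable_of_lt hc hind hdeg v hv) hk huv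
      (mem_nbrGroups_of_adj hind huv.le h)

theorem color_ne_of_adj (hu : u < n) (hv : v < n) (h : G.Adj u v) : c u ≠ c v := by
  rcases lt_or_gt_of_ne h.ne with huv | hvu
  · exact color_ne_of_adj_of_lt hc hind hdeg hv huv h
  · exact (color_ne_of_adj_of_lt hc hind hdeg hu hvu h.symm).symm

end Analysis

/-- At time `t` the algorithm replays the whole run of `step` on the prefix it sees;
`colors_congr` shows that this reproduces the colors it gave earlier. -/
noncomputable def algorithm (Δ t : ℕ) (input : SimpleGraph (Fin (t + 1)) × (Fin (t + 1) → ℕ)) :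
    ℕ :=
  colors Δ (input.1.map Fin.valEmbedding) (Function.extend Fin.val input.2 0) t

section FinInput

variable {m n : ℕ} {G : SimpleGraph (Fin n)} {γ : Fin n → ℕ}

theorem adj_map_valEmbedding_comap_castLE (h : m ≤ n) {a b : ℕ} (ha : a < m) (hb : b < m) :
    ((G.comap (Fin.castLE h)).map Fin.valEmbedding).Adj a b ↔
      (G.map Fin.valEmbedding).Adj a b :=
  (SimpleGraph.map_adj_apply (a := (⟨a, ha⟩ : Fin m)) (b := (⟨b, hb⟩ : Fin m))).trans
    (SimpleGraph.map_adj_apply (a := Fin.castLE h ⟨a, ha⟩) (b := Fin.castLE h ⟨b, hb⟩)).symm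

theorem extend_val_comp_castLE (h : m ≤ n) {a : ℕ} (ha : a < m) :
    Function.extend Fin.val (γ ∘ Fin.castLE h) 0 a = Function.extend Fin.val γ 0 a :=
  (Fin.val_injective.extend_apply _ _ (⟨a, ha⟩ : Fin m)).trans
    (Fin.val_injective.extend_apply _ _ (Fin.castLE h ⟨a, ha⟩)).symm

theorem groupColoring_algorithm (v : Fin n) :
    groupColoring (algorithm Δ) G γ v =
      colors Δ (G.map Fin.valEmbedding) (Function.extend Fin.val γ 0) v :=
  colors_congr
    (fun _ ha _ hb =>
      adj_map_valEmbedding_comap_castLE v.isLt (Nat.lt_succ_of_le ha) (Nat.lt_succ_of_le hb))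
    (fun _ ha => extend_val_comp_castLE v.isLt (Nat.lt_succ_of_le ha))

theorem nbrGroups_map_valEmbedding (v : Fin n) :
    nbrGroups (G.map Fin.valEmbedding) (Function.extend Fin.val γ 0) v =
      {j | j ≠ γ v ∧ ∃ u w : Fin n, u ≤ v ∧ w ≤ v ∧ γ u = γ v ∧ γ w = j ∧ G.Adj u w} := by
  ext j
  simp only [nbrGroups, Set.mem_ofPred_eq, Fin.val_injective.extend_apply]
  refine and_congr_right fun _ => ⟨?_, ?_⟩
  · rintro ⟨_, hu, _, hw, hγu, hγw, hadj⟩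
    obtain ⟨u, w, hadj', rfl, rfl⟩ := (SimpleGraph.map_adj _ _ _ _).1 hadj
    simp only [Fin.valEmbedding_apply, Fin.val_injective.extend_apply] at hγu hγw
    exact ⟨u, w, hu, hw, hγu, hγw, hadj'⟩
  · rintro ⟨u, w, hu, hw, hγu, hγw, hadj⟩
    exact ⟨u, hu, w, hw, (Fin.val_injective.extend_apply γ 0 u).trans hγu,
      (Fin.val_injective.extend_apply γ 0 w).trans hγw, SimpleGraph.map_adj_apply.2 hadj⟩

theorem not_adj_map_valEmbedding_of_extend_eq (hind : ∀ u v : Fin n, γ u = γ v → ¬ G.Adj u v)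
    (a b : ℕ) (hγ : Function.extend Fin.val γ 0 a = Function.extend Fin.val γ 0 b) :
    ¬ (G.map Fin.valEmbedding).Adj a b := by
  intro hadj
  obtain ⟨u, w, hadj', rfl, rfl⟩ := (SimpleGraph.map_adj _ _ _ _).1 hadj
  simp only [Fin.valEmbedding_apply, Fin.val_injective.extend_apply] at hγ
  exact hind u w hγ hadj'

end FinInput

end OnlineGroupColoring

open OnlineGroupColoring in
theorem online_group_coloring_general (Δ : ℕ) :
    ∃ A : (t : ℕ) → SimpleGraph (Fin (t + 1)) × (Fin (t + 1) → ℕ) → ℕ,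
      ∀ (n : ℕ), 1 ≤ n → ∀ (G : SimpleGraph (Fin n)) (γ : Fin n → ℕ),
        (∀ u v : Fin n, γ u = γ v → ¬ G.Adj u v) →
        (∀ v : Fin n,
          {j : ℕ | j ≠ γ v ∧ ∃ u w : Fin n, u ≤ v ∧ w ≤ v ∧
            γ u = γ v ∧ γ w = j ∧ G.Adj u w}.ncard ≤ Δ) →
        (∀ u v : Fin n, G.Adj u v → groupColoring A G γ u ≠ groupColoring A G γ v) ∧
        (∀ v : Fin n, 1 ≤ groupColoring A G γ v ∧ groupColoring A G γ v ≤ Δ ^ 2 + 2) := by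
  refine ⟨algorithm Δ, fun n _ G γ hind hdeg => ?_⟩
  have hc := colors_eq_step (Δ := Δ) (G := G.map Fin.valEmbedding)
    (γ := Function.extend Fin.val γ 0)
  have hind' := not_adj_map_valEmbedding_of_extend_eq hind
  have hdeg' (w : ℕ) (hw : w < n) := (nbrGroups_map_valEmbedding ⟨w, hw⟩).symm ▸ hdeg ⟨w, hw⟩
  refine ⟨fun u v h => ?_, fun v => ?_⟩
  · rw [groupColoring_algorithm, groupColoring_algorithm]
    exact color_ne_of_adj hc hind' hdeg' u.2 v.2 (SimpleGraph.map_adj_apply.2 h)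
  · rw [groupColoring_algorithm]
    exact color_mem_Icc hc hind' hdeg' v v.2

/-- There is a deterministic online group coloring algorithm using at most `Δ² + 2`
colors: whenever the arriving vertex's group has at most `Δ` neighboring groups in the
current neighbor graph, the produced coloring is proper and uses colors in `[1, Δ² + 2]`. -/
theorem online_group_coloring (Δ : ℕ) (hΔ : 1 ≤ Δ) :
    ∃ A : (t : ℕ) → SimpleGraph (Fin (t + 1)) × (Fin (t + 1) → ℕ) → ℕ,
      ∀ (n : ℕ), 1 ≤ n → ∀ (G : SimpleGraph (Fin n)) (γ : Fin n → ℕ),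
        (∀ u v : Fin n, γ u = γ v → ¬ G.Adj u v) →
        (∀ v : Fin n,
          {j : ℕ | j ≠ γ v ∧ ∃ u w : Fin n, u ≤ v ∧ w ≤ v ∧
            γ u = γ v ∧ γ w = j ∧ G.Adj u w}.ncard ≤ Δ) →
        (∀ u v : Fin n, G.Adj u v → groupColoring A G γ u ≠ groupColoring A G γ v) ∧
        (∀ v : Fin n, 1 ≤ groupColoring A G γ v ∧ groupColoring A G γ v ≤ Δ ^ 2 + 2) :=
  online_group_coloring_general Δ
end

section
/- Let k ≥ 1 and n ≥ 1 be integers, let G be a simple graph on Fin n with girth at least 2k+1 (i.e. G contains no cycle of length at most 2k), and let c : Fin n → ℕ be a First-Fit coloring of G with respect to the natural order on Fin n, meaning: for every vertex v, (i) c(u) ≠ c(v) for every u < v adjacent to v, and (ii) for every color j < c(v) there exists u < v adjacent to v with c(u) = j. Then c(v) < k · ⌈n^(1/k)⌉ for every vertex v; in particular First-Fit uses at most k · ⌈n^(1/k)⌉ colors on G. -/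
/-!
If `c v ≥ k·m`, then following base-`m` digit strings of length `k` from `v`, each time stepping
to a neighbour whose colour is the next digit plus `m` times the number of digits still to come,
produces `m ^ k` paths of length `k` out of `v` along which the colours strictly decrease. Their
colours spell out the digit strings, so the paths are pairwise distinct; since two distinct paths
with common endpoints close a cycle of length at most the sum of their lengths, girth `> 2k` forces
their endpoints to be distinct as well. Together with `v` this gives `m ^ k < n`, which fails for
`m = ⌈n ^ (1/k)⌉`.
-/

namespace SimpleGraph

variable {V : Type*} {G : SimpleGraph V}

theorem Walk.IsPath.eq_of_length_le {k : ℕ}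
    (hgirth : ∀ (x : V) (w : G.Walk x x), w.IsCycle → 2 * k < w.length)
    {u v : V} {p q : G.Walk u v} (hp : p.IsPath) (hq : q.IsPath)
    (hpk : p.length ≤ k) (hqk : q.length ≤ k) : p = q := by
  by_contra hne
  obtain ⟨w, -, -, C, hC, hCl⟩ := hp.exists_isCycle_length_le_add_of_ne hq hne
  have := hgirth w C hC
  omega

open Classical in
noncomputable def neighborOfColor (G : SimpleGraph V) (c : V → ℕ) (x : V) (j : ℕ) : V :=
  if h : ∃ u, G.Adj x u ∧ c u = j then h.choose else x

theorem adj_neighborOfColor {c : V → ℕ} {x : V} {j : ℕ} (h : ∃ u, G.Adj x u ∧ c u = j) :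
    G.Adj x (neighborOfColor G c x j) ∧ c (neighborOfColor G c x j) = j := by
  rw [neighborOfColor, dif_pos h]
  exact h.choose_spec

noncomputable def colorDescent (G : SimpleGraph V) (c : V → ℕ) (m : ℕ) : V → List (Fin m) → V
  | x, [] => x
  | x, i :: s => colorDescent G c m (neighborOfColor G c x (s.length * m + i)) s

section Grundy

variable {c : V → ℕ} {m : ℕ} (hgrundy : ∀ x, ∀ j < c x, ∃ u, G.Adj x u ∧ c u = j)
include hgrundy

theorem exists_isPath_colorDescent (s : List (Fin m)) {x : V} (hx : s.length * m ≤ c x) :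
    ∃ w : G.Walk x (colorDescent G c m x s), w.IsPath ∧ w.length = s.length ∧
      (∀ y ∈ w.support.tail, c y < c x) ∧
      w.support.tail.map (fun y => c y % m) = s.map Fin.val := by
  induction s generalizing x with
  | nil => exact ⟨.nil, .nil, rfl, fun _ => nofun, rfl⟩
  | cons i s ih =>
    have hcx : s.length * m + i < c x := by
      simp only [List.length_cons, add_mul, one_mul] at hx
      omega
    obtain ⟨hxu, hcu⟩ := adj_neighborOfColor (hgrundy x _ hcx)
    rw [colorDescent]
    generalize neighborOfColor G c x (s.length * m + i) = u at hxu hcu ⊢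
    obtain ⟨w, hw, hlen, hlt, hdigits⟩ := ih (x := u) (by omega)
    have hle : ∀ y ∈ w.support, c y ≤ c u := by
      rw [← w.cons_tail_support]
      rintro y (_ | ⟨_, hy⟩)
      exacts [le_rfl, (hlt y hy).le]
    refine ⟨.cons hxu w, ?_, by simpa, ?_, ?_⟩
    · exact hw.cons fun hx => by have := hle x hx; omega
    · intro y hy
      have := hle y hy
      omega
    · rw [Walk.support_cons, List.tail_cons, ← w.cons_tail_support, List.map_cons, List.map_cons,
        hdigits, hcu, Nat.mul_add_mod_of_lt i.isLt]

theorem eq_of_colorDescent_eq {k : ℕ}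
    (hgirth : ∀ (x : V) (w : G.Walk x x), w.IsCycle → 2 * k < w.length)
    {x : V} (hx : k * m ≤ c x) {s t : List (Fin m)} (hs : s.length = k) (ht : t.length = k)
    (h : colorDescent G c m x s = colorDescent G c m x t) : s = t := by
  obtain ⟨ws, hws, hwsl, -, hsd⟩ := exists_isPath_colorDescent hgrundy s (hs ▸ hx)
  obtain ⟨wt, hwt, hwtl, -, htd⟩ := exists_isPath_colorDescent hgrundy t (ht ▸ hx)
  have hw : ws = wt.copy rfl h.symm :=
    hws.eq_of_length_le hgirth (by simpa using hwt) (by omega) (by simp; omega)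
  apply List.map_injective_iff.mpr Fin.val_injective
  rw [← hsd, ← htd, hw, Walk.support_copy]

theorem pow_lt_card_of_le_color [Fintype V] {k : ℕ} (hk : 1 ≤ k)
    (hgirth : ∀ (x : V) (w : G.Walk x x), w.IsCycle → 2 * k < w.length)
    {v : V} (hv : k * m ≤ c v) : m ^ k < Fintype.card V := by
  have hlt : ∀ s : List.Vector (Fin m) k, c (colorDescent G c m v s.1) < c v := by
    intro s
    obtain ⟨w, -, hlen, hlt, -⟩ := exists_isPath_colorDescent hgrundy s.1 (s.2 ▸ hv)
    refine hlt _ (Walk.end_mem_tail_support ?_)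
    rw [← Walk.length_eq_zero_iff, hlen, s.2]
    omega
  let f : List.Vector (Fin m) k → {y // c y < c v} := fun s => ⟨_, hlt s⟩
  have hf : Function.Injective f := fun s t h =>
    Subtype.ext (eq_of_colorDescent_eq hgrundy hgirth hv s.2 t.2 (congrArg Subtype.val h))
  calc m ^ k = Fintype.card (List.Vector (Fin m) k) := by simp
    _ ≤ Fintype.card {y // c y < c v} := Fintype.card_le_of_injective f hf
    _ < Fintype.card V := Fintype.card_subtype_lt (lt_irrefl _)

end Grundy

end SimpleGraph

theorem Nat.le_ceil_rpow_one_div_pow (n : ℕ) {k : ℕ} (hk : k ≠ 0) :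
    n ≤ ⌈(n : ℝ) ^ (1 / (k : ℝ))⌉₊ ^ k := by
  have h : (n : ℝ) ≤ (⌈(n : ℝ) ^ (1 / (k : ℝ))⌉₊ : ℝ) ^ k := by
    calc (n : ℝ) = ((n : ℝ) ^ (1 / (k : ℝ))) ^ k := by
          rw [one_div, Real.rpow_inv_natCast_pow n.cast_nonneg hk]
      _ ≤ _ := by gcongr; exact Nat.le_ceil _
  exact_mod_cast h

theorem firstFit_of_girth_general (k n : ℕ) (hk : 1 ≤ k)
    (G : SimpleGraph (Fin n))
    (hgirth : ∀ (v : Fin n) (w : G.Walk v v), w.IsCycle → 2 * k < w.length)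
    (c : Fin n → ℕ)
    (hff : ∀ v : Fin n, ∀ j < c v, ∃ u : Fin n, u < v ∧ G.Adj u v ∧ c u = j) :
    ∀ v : Fin n, c v < k * ⌈(n : ℝ) ^ (1 / (k : ℝ))⌉₊ := by
  intro v
  by_contra! hv
  have hgrundy : ∀ x, ∀ j < c x, ∃ u, G.Adj x u ∧ c u = j := fun x j hj =>
    let ⟨u, _, hux, hcu⟩ := hff x j hj
    ⟨u, hux.symm, hcu⟩
  have hlt := SimpleGraph.pow_lt_card_of_le_color hgrundy hk hgirth hv
  have hle := Nat.le_ceil_rpow_one_div_pow n (k := k) (by omega)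
  rw [Fintype.card_fin] at hlt
  omega

/-- First-Fit uses at most `k · ⌈n^(1/k)⌉` colors on an `n`-vertex graph of girth at
least `2k + 1` (colors are natural numbers starting from 0, so every color is
`< k · ⌈n^(1/k)⌉`). -/
theorem firstFit_of_girth (k n : ℕ) (hk : 1 ≤ k) (hn : 1 ≤ n)
    (G : SimpleGraph (Fin n))
    (hgirth : ∀ (v : Fin n) (w : G.Walk v v), w.IsCycle → 2 * k < w.length)
    (c : Fin n → ℕ)
    (hproper : ∀ v u : Fin n, u < v → G.Adj u v → c u ≠ c v)
    (hff : ∀ v : Fin n, ∀ j < c v, ∃ u : Fin n, u < v ∧ G.Adj u v ∧ c u = j) :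
    ∀ v : Fin n, c v < k * ⌈(n : ℝ) ^ (1 / (k : ℝ))⌉₊ :=
  firstFit_of_girth_general k n hk G hgirth c hff
end

section
/- Let k ≥ 1 and d ≥ 1 be integers and let G be a finite simple graph containing no cycle of length at most 2k. Let S₁, S₂, …, S_{k+1} be pairwise disjoint sets of vertices of G such that for every i with 2 ≤ i ≤ k+1, every vertex of S_i has at least d neighbors in S_{i−1}. If S_{k+1} is nonempty, then |S₁| ≥ d^k. -/
/-!
Put `T m := S (k + 1 - m)` and fix `v ∈ T 0`. Call a walk ending at `v` layered if its vertex at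
distance `m` from `v` lies in `T m`; by disjointness of the layers, layered walks are paths. Two
layered walks of the same length `j ≤ k` starting at the same vertex would give a cycle of length
at most `2j ≤ 2k`, so they coincide. Hence distinct starting points of layered walks of length
`j < k` have disjoint sets of neighbours in `T (j + 1)`, and the number of starting points grows by
a factor `d` from one layer to the next.
-/

namespace SimpleGraph.Walk

variable {V : Type*} {G : SimpleGraph V}

theorem IsPath.eq_of_length_add_length_le {n : ℕ}
    (hcyc : ∀ (x : V) (c : G.Walk x x), c.IsCycle → n < c.length) {u v : V}
    {p q : G.Walk u v} (hp : p.IsPath) (hq : q.IsPath) (hlen : p.length + q.length ≤ n) :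
    p = q := by
  by_contra hne
  obtain ⟨_, _, p', q', hp', hq', hc⟩ := hp.exists_isCycle_of_ne hq hne
  have hlong := hcyc _ _ hc
  rw [length_append, length_reverse] at hlong
  have := length_le_of_isSubwalk hp'
  have := length_le_of_isSubwalk hq'
  omega

/-- The vertex at distance `m` from the end of the walk lies in `T m`. -/
def IsLayered (T : ℕ → Set V) : ∀ {u v : V}, G.Walk u v → Prop
  | u, _, nil => u ∈ T 0
  | u, _, cons _ p => u ∈ T (p.length + 1) ∧ p.IsLayered T

variable {T : ℕ → Set V}

theorem IsLayered.start_mem {u v : V} {p : G.Walk u v} (hp : p.IsLayered T) :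
    u ∈ T p.length := by
  cases p with
  | nil => exact hp
  | cons _ p => exact hp.1

theorem IsLayered.exists_mem_of_mem_support {u v : V} {p : G.Walk u v} (hp : p.IsLayered T)
    {x : V} (hx : x ∈ p.support) : ∃ m ≤ p.length, x ∈ T m := by
  induction p with
  | nil =>
    rw [support_nil, List.mem_singleton] at hx
    exact ⟨0, le_rfl, hx ▸ hp⟩
  | cons _ p ih =>
    rw [support_cons, List.mem_cons] at hx
    rcases hx with rfl | hx
    · exact ⟨_, le_rfl, hp.1⟩
    · obtain ⟨m, hm, hxm⟩ := ih hp.2 hx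
      exact ⟨m, by rw [length_cons]; omega, hxm⟩

theorem IsLayered.isPath {u v : V} {p : G.Walk u v} (hp : p.IsLayered T)
    (hT : (Set.Iic p.length).PairwiseDisjoint T) : p.IsPath := by
  induction p with
  | nil => exact .nil
  | cons h p ih =>
    refine (ih hp.2 (hT.subset fun m hm ↦ ?_)).cons fun hu ↦ ?_
    · simp only [Set.mem_Iic, length_cons] at hm ⊢; omega
    · obtain ⟨m, hm, hum⟩ := hp.2.exists_mem_of_mem_support hu
      refine Set.disjoint_left.mp (hT ?_ ?_ (by omega : p.length + 1 ≠ m)) hp.1 hum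
      · simp
      · simp only [Set.mem_Iic, length_cons]; omega

theorem IsLayered.eq_of_length_eq {n : ℕ}
    (hcyc : ∀ (x : V) (c : G.Walk x x), c.IsCycle → 2 * n < c.length)
    (hT : (Set.Iic n).PairwiseDisjoint T) {u v : V} {p q : G.Walk u v}
    (hp : p.IsLayered T) (hq : q.IsLayered T) (hlen : p.length = q.length) (hn : p.length ≤ n) :
    p = q :=
  (hp.isPath (hT.subset (Set.Iic_subset_Iic.mpr hn))).eq_of_length_add_length_le hcyc
    (hq.isPath (hT.subset (Set.Iic_subset_Iic.mpr (hlen ▸ hn)))) (by omega)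

theorem IsLayered.eq_of_adj_of_adj {n : ℕ}
    (hcyc : ∀ (x : V) (c : G.Walk x x), c.IsCycle → 2 * n < c.length)
    (hT : (Set.Iic n).PairwiseDisjoint T) {u u' v w : V} {p : G.Walk u v} {p' : G.Walk u' v}
    (hp : p.IsLayered T) (hp' : p'.IsLayered T) (hlen : p.length = p'.length)
    (hn : p.length < n) (hw : w ∈ T (p.length + 1)) (hu : G.Adj w u) (hu' : G.Adj w u') :
    u = u' := by
  have := IsLayered.eq_of_length_eq hcyc hT (p := .cons hu p) (q := .cons hu' p')
    ⟨hw, hp⟩ ⟨hlen ▸ hw, hp'⟩ (by simp [hlen]) (by simpa)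
  simpa using congrArg Walk.snd this

end SimpleGraph.Walk

namespace SimpleGraph

open Finset

variable {V : Type*} {G : SimpleGraph V}

open Classical in
noncomputable def layeredStarts [Fintype V] (G : SimpleGraph V) (T : ℕ → Set V) (v : V) (j : ℕ) :
    Finset V :=
  {u | ∃ p : G.Walk u v, p.length = j ∧ p.IsLayered T}

variable [Fintype V] {T : ℕ → Set V} {v : V}

theorem mem_layeredStarts {j : ℕ} {u : V} :
    u ∈ G.layeredStarts T v j ↔ ∃ p : G.Walk u v, p.length = j ∧ p.IsLayered T := by
  simp [layeredStarts]

theorem layeredStarts_subset {j : ℕ} : (G.layeredStarts T v j : Set V) ⊆ T j := by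
  intro u hu
  obtain ⟨p, rfl, hp⟩ := mem_layeredStarts.mp hu
  exact hp.start_mem

theorem mul_card_layeredStarts_le {n d j : ℕ}
    (hcyc : ∀ (x : V) (c : G.Walk x x), c.IsCycle → 2 * n < c.length)
    (hT : (Set.Iic n).PairwiseDisjoint T)
    (hdeg : ∀ u ∈ T j, d ≤ (G.neighborSet u ∩ T (j + 1)).ncard) (hj : j < n) :
    d * #(G.layeredStarts T v j) ≤ #(G.layeredStarts T v (j + 1)) := by
  classical
  set R := G.layeredStarts T v j
  let N : V → Finset V := fun u ↦ (G.neighborSet u ∩ T (j + 1)).toFinset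
  have hN : (R : Set V).PairwiseDisjoint N := by
    intro u hu u' hu' hne
    obtain ⟨p, rfl, hp⟩ := mem_layeredStarts.mp hu
    obtain ⟨p', hlen, hp'⟩ := mem_layeredStarts.mp hu'
    refine Finset.disjoint_left.mpr fun w hw hw' ↦ ?_
    simp only [N, Set.mem_toFinset, Set.mem_inter_iff, mem_neighborSet] at hw hw'
    exact hne <| hp.eq_of_adj_of_adj hcyc hT hp' hlen.symm hj hw.2 hw.1.symm hw'.1.symm
  have hsub : R.biUnion N ⊆ G.layeredStarts T v (j + 1) := by
    intro w hw
    obtain ⟨u, hu, hw⟩ := mem_biUnion.mp hw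
    obtain ⟨p, rfl, hp⟩ := mem_layeredStarts.mp hu
    simp only [N, Set.mem_toFinset, Set.mem_inter_iff, mem_neighborSet] at hw
    exact mem_layeredStarts.mpr ⟨.cons hw.1.symm p, rfl, hw.2, hp⟩
  calc d * #R = #R • d := by rw [smul_eq_mul, mul_comm]
    _ ≤ ∑ u ∈ R, #(N u) := by
      refine card_nsmul_le_sum _ _ _ fun u hu ↦ ?_
      simpa [N, Set.ncard_eq_toFinset_card'] using hdeg u (layeredStarts_subset hu)
    _ = #(R.biUnion N) := (card_biUnion hN).symm
    _ ≤ _ := card_le_card hsub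

theorem pow_le_ncard_layer_of_girth {n d : ℕ}
    (hcyc : ∀ (x : V) (c : G.Walk x x), c.IsCycle → 2 * n < c.length)
    (hT : (Set.Iic n).PairwiseDisjoint T)
    (hdeg : ∀ m < n, ∀ u ∈ T m, d ≤ (G.neighborSet u ∩ T (m + 1)).ncard)
    (hv : v ∈ T 0) : d ^ n ≤ (T n).ncard := by
  have count : ∀ j ≤ n, d ^ j ≤ #(G.layeredStarts T v j) := by
    intro j hj
    induction j with
    | zero => exact one_le_card.mpr ⟨v, mem_layeredStarts.mpr ⟨.nil, rfl, hv⟩⟩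
    | succ j ih =>
      calc d ^ (j + 1) = d * d ^ j := pow_succ' d j
        _ ≤ d * #(G.layeredStarts T v j) := Nat.mul_le_mul_left d (ih (by omega))
        _ ≤ _ := mul_card_layeredStarts_le hcyc hT (hdeg j (by omega)) (by omega)
  calc d ^ n ≤ #(G.layeredStarts T v n) := count n le_rfl
    _ = (G.layeredStarts T v n : Set V).ncard := (Set.ncard_coe_finset _).symm
    _ ≤ (T n).ncard := Set.ncard_le_ncard layeredStarts_subset

end SimpleGraph

theorem layered_sets_of_girth_general {V : Type*} [Fintype V] (G : SimpleGraph V)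
    (k d : ℕ)
    (hgirth : ∀ (v : V) (w : G.Walk v v), w.IsCycle → 2 * k < w.length)
    (S : ℕ → Set V)
    (hdisj : ∀ i j : ℕ, 1 ≤ i → i ≤ k + 1 → 1 ≤ j → j ≤ k + 1 → i ≠ j →
      Disjoint (S i) (S j))
    (hdeg : ∀ i : ℕ, 2 ≤ i → i ≤ k + 1 → ∀ v ∈ S i,
      d ≤ (G.neighborSet v ∩ S (i - 1)).ncard)
    (hne : (S (k + 1)).Nonempty) :
    d ^ k ≤ (S 1).ncard := by
  obtain ⟨v, hv⟩ := hne
  have hT : (Set.Iic k).PairwiseDisjoint fun m ↦ S (k + 1 - m) := by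
    intro i hi j hj hij
    rw [Set.mem_Iic] at hi hj
    exact hdisj _ _ (by omega) (by omega) (by omega) (by omega) (by omega)
  have hdegT : ∀ m < k, ∀ u ∈ S (k + 1 - m),
      d ≤ (G.neighborSet u ∩ S (k + 1 - (m + 1))).ncard := by
    intro m hm u hu
    rw [show k + 1 - (m + 1) = k + 1 - m - 1 by omega]
    exact hdeg (k + 1 - m) (by omega) (by omega) u hu
  simpa using G.pow_le_ncard_layer_of_girth hgirth hT hdegT (v := v) (by simpa using hv)

/-- In a finite graph with no cycle of length at most `2k`, if the pairwise disjoint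
vertex sets `S 1, …, S (k+1)` are such that every vertex of `S i` (for `2 ≤ i ≤ k+1`)
has at least `d` neighbors in `S (i-1)`, and `S (k+1)` is nonempty, then
`|S 1| ≥ d^k`. -/
theorem layered_sets_of_girth {V : Type*} [Fintype V] (G : SimpleGraph V)
    (k d : ℕ) (hk : 1 ≤ k) (hd : 1 ≤ d)
    (hgirth : ∀ (v : V) (w : G.Walk v v), w.IsCycle → 2 * k < w.length)
    (S : ℕ → Set V)
    (hdisj : ∀ i j : ℕ, 1 ≤ i → i ≤ k + 1 → 1 ≤ j → j ≤ k + 1 → i ≠ j →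
      Disjoint (S i) (S j))
    (hdeg : ∀ i : ℕ, 2 ≤ i → i ≤ k + 1 → ∀ v ∈ S i,
      d ≤ (G.neighborSet v ∩ S (i - 1)).ncard)
    (hne : (S (k + 1)).Nonempty) :
    d ^ k ≤ (S 1).ncard :=
  layered_sets_of_girth_general G k d hgirth S hdisj hdeg hne
end

section
/- Let k ≥ 1 be an integer and let G be a simple graph containing no cycle of length at most 2k. Then for every pair of vertices u and v of G, there is at most one path from u to v of length at most k; that is, any two paths from u to v each of length at most k are equal. -/
theorem path_unique_of_girth_general {V : Type*} (G : SimpleGraph V) (k : ℕ)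
    (hgirth : ∀ (v : V) (w : G.Walk v v), w.IsCycle → 2 * k < w.length) :
    ∀ (u v : V) (p q : G.Walk u v), p.IsPath → q.IsPath →
      p.length ≤ k → q.length ≤ k → p = q := by
  intro u v p q hp hq hpk hqk
  by_contra hne
  obtain ⟨w, -, -, c, hc, hc_len⟩ := hp.exists_isCycle_length_le_add_of_ne hq hne
  have := hgirth w c hc
  omega

/-- In a graph with no cycle of length at most `2k`, any two paths between the same
pair of vertices, each of length at most `k`, coincide. -/
theorem path_unique_of_girth {V : Type*} (G : SimpleGraph V) (k : ℕ) (hk : 1 ≤ k)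
    (hgirth : ∀ (v : V) (w : G.Walk v v), w.IsCycle → 2 * k < w.length) :
    ∀ (u v : V) (p q : G.Walk u v), p.IsPath → q.IsPath →
      p.length ≤ k → q.length ≤ k → p = q :=
  path_unique_of_girth_general G k hgirth
end

section
/- Let d ≥ 0 be an even integer and let G be a simple graph containing no cycle of odd length at most d + 3. Let X be a set of vertices of G with even-diameter at most d, i.e. for every two vertices x, y ∈ X there is a walk in G from x to y of even length at most d. Then the set of all vertices adjacent to at least one vertex of X is an independent set: if y₁ is adjacent to some x₁ ∈ X and y₂ is adjacent to some x₂ ∈ X, then y₁ and y₂ are not adjacent in G. -/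
/-!
Adjacent neighbours `y₁ ∼ y₂` of `x₁, x₂ ∈ X` would close an even walk `x₂ ⟶ x₁` of length at
most `d` into an odd closed walk `x₁ y₁ y₂ x₂ ⋯ x₁` of length at most `d + 3`, and every odd closed
walk contains an odd cycle no longer than itself.
-/

namespace SimpleGraph.Walk

variable {V : Type*} {G : SimpleGraph V}

/-- Shortcutting a walk at a repeated vertex cuts off a closed walk; as long as that closed walk
is even, the shortcut keeps the parity, and once it is odd it is an odd cycle. -/
theorem exists_isPath_same_parity_or_odd_isCycle {u v : V} (p : G.Walk u v) :
    (∃ q : G.Walk u v, q.IsPath ∧ q.length ≤ p.length ∧ Even (q.length + p.length)) ∨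
      ∃ (x : V) (c : G.Walk x x), c.IsCycle ∧ Odd c.length ∧ c.length ≤ p.length := by
  classical
  induction p with
  | nil => exact .inl ⟨nil, .nil, le_rfl, .zero⟩
  | @cons u w v huw p ih =>
    obtain ⟨q, hq, hq_le, hq_par⟩ | ⟨x, c, hc, hc_odd, hc_le⟩ := ih
    · simp only [length_cons]
      by_cases hu : u ∈ q.support
      · have hsplit : (q.takeUntil u hu).length + (q.dropUntil u hu).length = q.length := by
          rw [← length_append, take_spec]
        rcases Nat.even_or_odd ((q.takeUntil u hu).length + 1) with h_even | h_odd
        · refine .inl ⟨q.dropUntil u hu, hq.dropUntil hu, by omega, ?_⟩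
          grind [Nat.even_add_one]
        · refine .inr ⟨u, cons huw (q.takeUntil u hu), ?_, h_odd,
            by simp only [length_cons]; omega⟩
          refine (cons_isCycle_iff _ huw).mpr ⟨hq.takeUntil hu, fun h_mem ↦ ?_⟩
          have h_one := (hq.takeUntil hu).length_eq_one_of_mem_edges (Sym2.eq_swap ▸ h_mem)
          rw [h_one] at h_odd
          exact Nat.not_odd_iff_even.mpr even_two h_odd
      · refine .inl ⟨cons huw q, hq.cons hu, by simpa using hq_le, ?_⟩
        grind [length_cons, Nat.even_add_one]
    · exact .inr ⟨x, c, hc, hc_odd, by rw [length_cons]; omega⟩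

theorem exists_odd_isCycle_of_odd_length {v : V} (p : G.Walk v v) (hp : Odd p.length) :
    ∃ (x : V) (c : G.Walk x x), c.IsCycle ∧ Odd c.length ∧ c.length ≤ p.length := by
  refine p.exists_isPath_same_parity_or_odd_isCycle.resolve_left ?_
  rintro ⟨q, hq, -, h_par⟩
  rw [(isPath_iff_nil.mp hq).length_eq_zero, zero_add] at h_par
  exact Nat.not_odd_iff_even.mpr h_par hp

end SimpleGraph.Walk

open SimpleGraph Walk

theorem neighborhood_independent_of_even_diameter_general {V : Type*} (G : SimpleGraph V)
    (d : ℕ)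
    (hgirth : ∀ (v : V) (w : G.Walk v v), w.IsCycle → Odd w.length → d + 3 < w.length)
    (X : Set V)
    (hX : ∀ x ∈ X, ∀ y ∈ X, ∃ w : G.Walk x y, Even w.length ∧ w.length ≤ d) :
    ∀ y₁ y₂ x₁ x₂ : V, x₁ ∈ X → x₂ ∈ X → G.Adj y₁ x₁ → G.Adj y₂ x₂ →
      ¬ G.Adj y₁ y₂ := by
  intro y₁ y₂ x₁ x₂ hx₁ hx₂ h₁ h₂ hy
  obtain ⟨w, hw_even, hw_le⟩ := hX x₁ hx₁ x₂ hx₂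
  let c : G.Walk x₁ x₁ := cons h₁.symm (cons hy (cons h₂ w.reverse))
  have hc_len : c.length = w.length + 3 := by simp [c]
  obtain ⟨x, cyc, hcyc, hcyc_odd, hcyc_le⟩ :=
    c.exists_odd_isCycle_of_odd_length (hc_len ▸ hw_even.add_odd (by decide))
  have := hgirth x cyc hcyc hcyc_odd
  omega

/-- If `G` has no odd cycle of length at most `d + 3` and `X` has even-diameter at most
`d` (every two vertices of `X` are joined by an even walk of length at most `d`), then
the neighborhood of `X` is an independent set. -/
theorem neighborhood_independent_of_even_diameter {V : Type*} (G : SimpleGraph V)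
    (d : ℕ) (hd : Even d)
    (hgirth : ∀ (v : V) (w : G.Walk v v), w.IsCycle → Odd w.length → d + 3 < w.length)
    (X : Set V)
    (hX : ∀ x ∈ X, ∀ y ∈ X, ∃ w : G.Walk x y, Even w.length ∧ w.length ≤ d) :
    ∀ y₁ y₂ x₁ x₂ : V, x₁ ∈ X → x₂ ∈ X → G.Adj y₁ x₁ → G.Adj y₂ x₂ →
      ¬ G.Adj y₁ y₂ :=
  neighborhood_independent_of_even_diameter_general G d hgirth X hX
end

section
/- Let G be a simple graph, let d ≥ 0 be an even integer, and let m ≥ 0 be an even integer. Let X₀, X₁, …, X_m be sets of vertices of G, each of even-diameter at most d, i.e. for every two vertices x, y in the same X_i there is a walk in G from x to y of even length at most d. Suppose that for every i with 0 ≤ i < m there exist vertices y_i and z_{i+1} of G such that y_i is adjacent to some vertex of X_i, z_{i+1} is adjacent to some vertex of X_{i+1}, and y_i is adjacent to z_{i+1}. Then for every u ∈ X₀ and v ∈ X_m there is a walk in G from u to v of even length at most (d+3)(m+1) − 3. -/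
/-!
Walk from `X 0` to `X k` by induction on `k`: append to a walk ending in `X k` the three
edges `x ~ y ~ z ~ x'` of the link into `X (k + 1)`, followed by an even walk of length at
most `d` inside `X (k + 1)`. Each link adds `d + 3` to the length bound and flips the
parity, so the walk to `X m` has length at most `d (m + 1) + 3 m` and, `m` being even,
even length.
-/

namespace SimpleGraph

variable {V : Type*} {G : SimpleGraph V}

lemma exists_walk_of_linked_chain {d m : ℕ} {X : ℕ → Set V}
    (hX : ∀ i ≤ m, ∀ x ∈ X i, ∀ y ∈ X i,
      ∃ w : G.Walk x y, Even w.length ∧ w.length ≤ d)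
    (hlink : ∀ i < m, ∃ y z : V,
      (∃ x ∈ X i, G.Adj y x) ∧ (∃ x ∈ X (i + 1), G.Adj z x) ∧ G.Adj y z) :
    ∀ k ≤ m, ∀ u ∈ X 0, ∀ v ∈ X k,
      ∃ w : G.Walk u v, Even (w.length + k) ∧ w.length ≤ d * (k + 1) + 3 * k := by
  intro k
  induction k with
  | zero =>
    intro _ u hu v hv
    simpa using hX 0 (Nat.zero_le m) u hu v hv
  | succ k ih =>
    intro hk u hu v hv
    obtain ⟨y, z, ⟨x, hx, hyx⟩, ⟨x', hx', hzx'⟩, hyz⟩ := hlink k hk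
    obtain ⟨w₁, hw₁_even, hw₁_le⟩ := ih (Nat.le_of_succ_le hk) u hu x hx
    obtain ⟨w₂, hw₂_even, hw₂_le⟩ := hX (k + 1) hk x' hx' v hv
    let w := w₁.append (.cons hyx.symm (.cons hyz (.cons hzx' w₂)))
    have hw : w.length = w₁.length + 3 + w₂.length := by
      simp only [w, Walk.length_append, Walk.length_cons]
      omega
    refine ⟨w, ?_, ?_⟩
    · rw [hw, Nat.even_iff]
      rw [Nat.even_iff] at hw₁_even hw₂_even
      omega
    · rw [hw]
      nlinarith

end SimpleGraph

theorem merged_sets_even_diameter_general {V : Type*} (G : SimpleGraph V)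
    (d m : ℕ) (hm : Even m)
    (X : ℕ → Set V)
    (hX : ∀ i ≤ m, ∀ x ∈ X i, ∀ y ∈ X i,
      ∃ w : G.Walk x y, Even w.length ∧ w.length ≤ d)
    (hlink : ∀ i < m, ∃ y z : V,
      (∃ x ∈ X i, G.Adj y x) ∧ (∃ x ∈ X (i + 1), G.Adj z x) ∧ G.Adj y z) :
    ∀ u ∈ X 0, ∀ v ∈ X m,
      ∃ w : G.Walk u v, Even w.length ∧ w.length ≤ (d + 3) * (m + 1) - 3 := by
  intro u hu v hv
  obtain ⟨w, hw_even, hw_le⟩ := G.exists_walk_of_linked_chain hX hlink m le_rfl u hu v hv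
  refine ⟨w, (Nat.even_add.mp hw_even).mpr hm, ?_⟩
  have : (d + 3) * (m + 1) = d * (m + 1) + 3 * m + 3 := by ring
  omega

/-- Merging a chain of sets `X 0, …, X m`, each of even-diameter at most `d`, where
consecutive sets are linked by a pair of adjacent vertices respectively adjacent to the
two sets, yields even walks of length at most `(d+3)(m+1) − 3` from `X 0` to `X m`. -/
theorem merged_sets_even_diameter {V : Type*} (G : SimpleGraph V)
    (d m : ℕ) (hd : Even d) (hm : Even m)
    (X : ℕ → Set V)
    (hX : ∀ i ≤ m, ∀ x ∈ X i, ∀ y ∈ X i,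
      ∃ w : G.Walk x y, Even w.length ∧ w.length ≤ d)
    (hlink : ∀ i < m, ∃ y z : V,
      (∃ x ∈ X i, G.Adj y x) ∧ (∃ x ∈ X (i + 1), G.Adj z x) ∧ G.Adj y z) :
    ∀ u ∈ X 0, ∀ v ∈ X m,
      ∃ w : G.Walk u v, Even w.length ∧ w.length ≤ (d + 3) * (m + 1) - 3 :=
  merged_sets_even_diameter_general G d m hm X hX hlink
end
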